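/- arXiv:1506.09046 — 2 statements merged into one kernel-verified Lean document; each statement's English description precedes it below -/
import Mathlib

section
/- Let $P(\lambda, r) := (-\lambda + r^{2\alpha} + \mu + k + f'(0))(\sqrt{-\lambda + r^2} + 1) - \mu$ for $r \geq 0$ and $\lambda \in \mathbb{C}$, where the square root is the principal branch. Let $r_0$ be the unique positive root of $r_0^2 = r_0^{2\alpha} + f'(0) + k$. Then for $0 \leq r < r_0$, $P(\lambda, r) \neq 0$ for all $\lambda \in \mathbb{C}$ (with $-\lambda + r^2 \notin \mathbb{R}_-$). -/
/-! Writing `w = √(-λ + r²)`, so that `Re w > 0`, the equation `P(λ, r) = 0` becomes the cubic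
`w³ + w² + (c + μ) w + c = 0` with `c = r^{2α} + f'(0) + k - r² > 0` (positive because `r < r₀`).
The Routh–Hurwitz condition `1 · (c + μ) ≥ c` rules out roots in the open right half plane. -/

open Complex

theorem Complex.cpow_inv_two_re_pos {z : ℂ} (hz : z ∈ slitPlane) : 0 < (z ^ (2⁻¹ : ℂ)).re := by
  rw [cpow_inv_two_re, Real.sqrt_pos]
  rcases mem_slitPlane_iff.mp hz with hre | him
  · positivity
  · linarith [neg_abs_le z.re, abs_re_lt_norm.mpr him]

theorem Complex.mem_slitPlane_of_forall_ne_ofReal {z : ℂ} (hz : ∀ s : ℝ, s ≤ 0 → z ≠ s) :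
    z ∈ slitPlane := by
  by_contra! h
  rw [mem_slitPlane_iff, not_or, not_lt, not_not] at h
  exact hz z.re h.1 (ext rfl (by simp [h.2]))

theorem cubic_ne_zero_of_re_pos {p q c : ℝ} (hp : 0 ≤ p) (hq : 0 ≤ q) (hc : 0 ≤ c)
    (hcpq : c ≤ p * q) {w : ℂ} (hw : 0 < w.re) :
    w ^ 3 + p * w ^ 2 + q * w + c ≠ 0 := by
  intro h
  set x := w.re
  set y := w.im
  have hre : x ^ 3 - 3 * x * y ^ 2 + p * (x ^ 2 - y ^ 2) + q * x + c = 0 := by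
    have := congrArg re h
    simp only [pow_succ, pow_zero, one_mul, add_re, mul_re, mul_im, ofReal_re, ofReal_im,
      zero_re] at this
    linear_combination this
  have him : y * (3 * x ^ 2 + 2 * p * x + q - y ^ 2) = 0 := by
    have := congrArg im h
    simp only [pow_succ, pow_zero, one_mul, add_im, mul_re, mul_im, ofReal_re, ofReal_im,
      zero_im] at this
    linear_combination this
  rcases mul_eq_zero.mp him with hy | hy
  · rw [hy] at hre
    nlinarith [pow_pos hw 3, mul_nonneg hp (sq_nonneg x), mul_nonneg hq hw.le]
  -- off the real axis, `Im = 0` fixes `y²`, and then `-Re` is visibly positive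
  · have hy2 : y ^ 2 = 3 * x ^ 2 + 2 * p * x + q := by linarith
    have : 8 * x ^ 3 + 8 * p * x ^ 2 + 2 * q * x + 2 * p ^ 2 * x + (p * q - c) = 0 := by
      linear_combination -hre - (3 * x + p) * hy2
    nlinarith [pow_pos hw 3, mul_nonneg hp (sq_nonneg x), mul_nonneg hq hw.le,
      mul_nonneg (sq_nonneg p) hw.le]

theorem Real.one_lt_of_rpow_lt_sq {β s : ℝ} (hs0 : 0 < s) (hβ : β ≤ 2) (hs : s ^ β < s ^ 2) :
    1 < s := by
  by_contra! h
  have := Real.rpow_le_rpow_of_exponent_ge hs0 h hβ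
  norm_cast at this
  linarith

theorem Real.sq_sub_rpow_lt_of_lt {β r s : ℝ} (hβ0 : 0 < β) (hβ2 : β < 2) (hr : 0 ≤ r)
    (hrs : r < s) (hs : s ^ β < s ^ 2) : r ^ 2 - r ^ β < s ^ 2 - s ^ β := by
  have hs1 := Real.one_lt_of_rpow_lt_sq (hr.trans_lt hrs) hβ2.le hs
  have split (t : ℝ) (ht : 0 ≤ t) : t ^ 2 - t ^ β = t ^ β * (t ^ (2 - β) - 1) := by
    rw [mul_sub, ← Real.rpow_add' ht (by norm_num), add_sub_cancel, mul_one]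
    norm_cast
  rw [split r hr, split s (hr.trans hrs.le)]
  calc r ^ β * (r ^ (2 - β) - 1) ≤ r ^ β * (s ^ (2 - β) - 1) := by
        gcongr
    _ < s ^ β * (s ^ (2 - β) - 1) := by
        gcongr
        linarith [Real.one_lt_rpow hs1 (by linarith : 0 < 2 - β)]

theorem stmt12_general (α μ k a r₀ : ℝ) (hα : α ∈ Set.Ioo (0:ℝ) 1) (hμ : 0 < μ)
    (hk : 0 ≤ k) (ha : 0 < a)
    (hr₀eq : r₀ ^ 2 = r₀ ^ (2 * α) + a + k) :
    ∀ r : ℝ, 0 ≤ r → r < r₀ → ∀ lam : ℂ,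
      (∀ s : ℝ, s ≤ 0 → -lam + (r : ℂ) ^ 2 ≠ (s : ℂ)) →
      ((-lam + ((r ^ (2 * α) : ℝ) : ℂ) + (μ : ℂ) + (k : ℂ) + (a : ℂ)) *
          ((-lam + (r : ℂ) ^ 2) ^ ((1 : ℂ) / 2) + 1) - (μ : ℂ)) ≠ 0 := by
  intro r hr hrr₀ lam hlam
  have hw2 : ((-lam + (r : ℂ) ^ 2) ^ ((1 : ℂ) / 2)) ^ 2 = -lam + (r : ℂ) ^ 2 := by
    rw [one_div]; exact cpow_ofNat_inv_pow _ 2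
  have hw : 0 < ((-lam + (r : ℂ) ^ 2) ^ ((1 : ℂ) / 2)).re := by
    rw [one_div]; exact cpow_inv_two_re_pos (mem_slitPlane_of_forall_ne_ofReal hlam)
  generalize (-lam + (r : ℂ) ^ 2) ^ ((1 : ℂ) / 2) = w at hw2 hw ⊢
  have hc : 0 < r ^ (2 * α) + a + k - r ^ 2 := by
    have := Real.sq_sub_rpow_lt_of_lt (by linarith [hα.1]) (by linarith [hα.2]) hr hrr₀
      (by linarith : r₀ ^ (2 * α) < r₀ ^ 2)
    linarith
  intro hP
  refine cubic_ne_zero_of_re_pos (p := 1) (q := r ^ (2 * α) + a + k - r ^ 2 + μ)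
    zero_le_one (by linarith) hc.le (by linarith) hw ?_
  push_cast
  linear_combination hP + (w + 1) * hw2

/-- Let `P(λ,r) = (-λ + r^{2α} + μ + k + f'(0))(√(-λ + r²) + 1) - μ` with the principal
square root, and let `r₀ > 0` satisfy `r₀² = r₀^{2α} + f'(0) + k`. Then for `0 ≤ r < r₀`,
`P(λ,r) ≠ 0` for every `λ ∈ ℂ` such that `-λ + r²` is not a nonpositive real. -/
theorem stmt12 (α μ k a r₀ : ℝ) (hα : α ∈ Set.Ioo (0:ℝ) 1) (hμ : 0 < μ)
    (hk : 0 ≤ k) (ha : 0 < a)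
    (hr₀ : 0 < r₀) (hr₀eq : r₀ ^ 2 = r₀ ^ (2 * α) + a + k) :
    ∀ r : ℝ, 0 ≤ r → r < r₀ → ∀ lam : ℂ,
      (∀ s : ℝ, s ≤ 0 → -lam + (r : ℂ) ^ 2 ≠ (s : ℂ)) →
      ((-lam + ((r ^ (2 * α) : ℝ) : ℂ) + (μ : ℂ) + (k : ℂ) + (a : ℂ)) *
          ((-lam + (r : ℂ) ^ 2) ^ ((1 : ℂ) / 2) + 1) - (μ : ℂ)) ≠ 0 :=
  stmt12_general α μ k a r₀ hα hμ hk ha hr₀eq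
end

section
/- Let $\alpha \in (0,1)$ and let $\phi : \mathbb{R} \to \mathbb{R}$ be a bounded $C^2$ function, even, nonincreasing in $|x|$, and constant on $[-A_1, A_1]$ for some $A_1 > 0$, with $-\phi''(x) \leq D_0\,\phi(x)/(1+x^2)$ for $|x| \geq A_1$ and $\phi(x) \geq c_0(1+|x|)^{-\sigma}$ for some $c_0, \sigma, D_0 > 0$. Then there exists $D > 0$ such that $(-\Delta)^\alpha \phi(x) \leq D\,\phi(x)$ for all $x \in \mathbb{R}$. -/
/-!
Adding `c t² / 2` to `φ` makes it convex wherever `-φ'' ≤ c`, so the second difference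
`2 φ(x) - φ(x + y) - φ(x - y)` is at most `c y²`. For `|x|` bounded take `c = sup |φ''|` there and
use that `φ` is bounded below on that interval. For large `x` take `c = D₀ φ(x - y)`: either
`φ(x - y) ≤ 2 φ(x)`, or the second difference is negative anyway. Since it is also at most `2 φ(x)`,
it is bounded by `C φ(x) min(y², 1)`, and `min(y², 1) |y|^(-1-2α)` is integrable.
-/

open Real MeasureTheory

/-- The symmetrized form of `c_α p.v. ∫ (h x - h y) / |x - y| ^ (1 + 2α) dy`, which needs no
principal value. -/
noncomputable def fracLap (α cα : ℝ) (h : ℝ → ℝ) (x : ℝ) : ℝ :=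
  cα * ∫ z : ℝ, (2 * h x - h (x + z) - h (x - z)) / (2 * |z| ^ (1 + 2 * α))

open Set

def secondDiff (f : ℝ → ℝ) (x y : ℝ) : ℝ := 2 * f x - f (x + y) - f (x - y)

theorem secondDiff_le_of_neg_deriv2_le {f : ℝ → ℝ} {x y c : ℝ} (hf : Differentiable ℝ f)
    (hf' : Differentiable ℝ (deriv f)) (hy : 0 ≤ y)
    (h : ∀ τ ∈ Icc (x - y) (x + y), -deriv (deriv f) τ ≤ c) :
    secondDiff f x y ≤ c * y ^ 2 := by
  set g : ℝ → ℝ := fun t => f t + c / 2 * t ^ 2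
  have hg' : deriv g = fun t => deriv f t + c * t := by
    funext t
    exact ((hf t).hasDerivAt.add ((hasDerivAt_pow 2 t).const_mul (c / 2))).deriv.trans (by ring)
  have hg'' : ∀ t, deriv^[2] g t = deriv (deriv f) t + c := fun t => by
    simp only [Function.iterate_succ, Function.iterate_zero, Function.comp_apply, id, hg']
    exact ((hf' t).hasDerivAt.add ((hasDerivAt_id t).const_mul c)).deriv.trans (by simp)
  have hconv : ConvexOn ℝ (Icc (x - y) (x + y)) g :=
    convexOn_of_deriv2_nonneg' (convex_Icc _ _) (by fun_prop)
      (by rw [hg']; fun_prop) fun t ht => by rw [hg'']; linarith [h t ht]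
  have hmid := hconv.2 (left_mem_Icc.2 (by linarith)) (right_mem_Icc.2 (by linarith))
    (by norm_num : (0 : ℝ) ≤ 1 / 2) (by norm_num : (0 : ℝ) ≤ 1 / 2) (by norm_num)
  simp only [g, smul_eq_mul] at hmid
  unfold secondDiff
  rw [show 1 / 2 * (x - y) + 1 / 2 * (x + y) = x by ring] at hmid
  linarith

theorem integrable_min_sq_one_mul_abs_rpow {s : ℝ} (hs₀ : -3 < s) (hs₁ : s < -1) :
    Integrable fun z : ℝ => min (z ^ 2) 1 * |z| ^ s := by
  have key := (integrable_fun_norm_addHaar (volume : Measure ℝ)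
    (f := fun y : ℝ => min (y ^ 2) 1 * y ^ s)).2
  simp only [Module.finrank_self, Nat.sub_self, pow_zero, one_smul, Real.norm_eq_abs,
    sq_abs] at key
  apply key
  rw [← Ioc_union_Ioi_eq_Ioi zero_le_one]
  refine IntegrableOn.union ?_ ?_
  · have : IntegrableOn (fun y : ℝ => y ^ (s + 2)) (Ioc 0 1) := by
      have := intervalIntegral.intervalIntegrable_rpow' (a := 0) (b := 1) (r := s + 2) (by linarith)
      rwa [intervalIntegrable_iff_integrableOn_Ioc_of_le zero_le_one] at this
    refine this.congr_fun (fun y hy => ?_) measurableSet_Ioc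
    rw [min_eq_left (by nlinarith [hy.1, hy.2]), ← rpow_two, ← rpow_add hy.1, add_comm]
  · refine (integrableOn_Ioi_rpow_of_lt hs₁ zero_lt_one).congr_fun (fun y hy => ?_)
      measurableSet_Ioi
    rw [min_eq_right (by nlinarith [mem_Ioi.1 hy]), one_mul]

theorem fracLap_le_of_secondDiff_le {α cα c x : ℝ} {φ : ℝ → ℝ} (hα : α ∈ Ioo 0 1)
    (hcα : 0 ≤ cα) (hc : 0 ≤ c)
    (h : ∀ y, 0 < y → secondDiff φ x y ≤ c * min (y ^ 2) 1) :
    fracLap α cα φ x ≤ cα * (c / 2 * ∫ z, min (z ^ 2) 1 * |z| ^ (-(1 + 2 * α))) := by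
  have hw := integrable_min_sq_one_mul_abs_rpow (s := -(1 + 2 * α)) (by linarith [hα.2])
    (by linarith [hα.1])
  have hpt : ∀ z : ℝ, z ≠ 0 → secondDiff φ x z / (2 * |z| ^ (1 + 2 * α)) ≤
      c / 2 * (min (z ^ 2) 1 * |z| ^ (-(1 + 2 * α))) := by
    intro z hz
    have hN : secondDiff φ x z ≤ c * min (z ^ 2) 1 := by
      rcases hz.lt_or_gt with hz | hz
      · simpa [secondDiff, ← sub_eq_add_neg, add_comm, sub_sub, add_sub_right_comm] using
          h (-z) (by linarith)
      · exact h z hz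
    rw [rpow_neg (abs_nonneg z), div_le_iff₀ (by positivity)]
    calc _ ≤ c * min (z ^ 2) 1 := hN
      _ = _ := by field_simp
  change cα * ∫ z, secondDiff φ x z / (2 * |z| ^ (1 + 2 * α)) ≤ _
  gcongr
  by_cases hi : Integrable fun z : ℝ => secondDiff φ x z / (2 * |z| ^ (1 + 2 * α))
  · rw [← integral_const_mul]
    refine integral_mono_ae hi (hw.const_mul _) ?_
    filter_upwards [compl_mem_ae_iff.2 (measure_singleton (0 : ℝ))] with z hz
    exact hpt z hz
  · -- the Bochner integral of a non-integrable function is `0`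
    rw [integral_undef hi]
    positivity

theorem fracLap_neg {α cα : ℝ} {φ : ℝ → ℝ} (heven : ∀ x, φ (-x) = φ x) (x : ℝ) :
    fracLap α cα φ (-x) = fracLap α cα φ x := by
  unfold fracLap
  rw [← integral_neg_eq_self]
  congr 2 with z
  rw [abs_neg, show -x + -z = -(x + z) by ring, show -x - -z = -(x - z) by ring, heven, heven,
    heven]

theorem secondDiff_le_two_mul_of_neg_deriv2_le_mul {f : ℝ → ℝ} {A D x y : ℝ}
    (hf : Differentiable ℝ f) (hf' : Differentiable ℝ (deriv f)) (hnn : ∀ t, 0 ≤ f t)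
    (hanti : AntitoneOn f (Ici 0)) (hA : 0 ≤ A) (hD : 0 ≤ D)
    (hsecond : ∀ τ, A ≤ τ → -deriv (deriv f) τ ≤ D * f τ) (hy : 0 ≤ y) (hxy : A + y ≤ x) :
    secondDiff f x y ≤ 2 * D * f x * y ^ 2 := by
  by_cases hcmp : f (x - y) ≤ 2 * f x
  · have hN := secondDiff_le_of_neg_deriv2_le hf hf' hy (c := D * f (x - y)) fun τ hτ =>
      (hsecond τ (by linarith [hτ.1])).trans <| mul_le_mul_of_nonneg_left
        (hanti (by simp; linarith) (by simp; linarith [hτ.1]) hτ.1) hD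
    calc _ ≤ D * f (x - y) * y ^ 2 := hN
      _ ≤ D * (2 * f x) * y ^ 2 := by gcongr
      _ = _ := by ring
  · have := hnn (x + y)
    have : 0 ≤ D * f x * y ^ 2 := by have := hnn x; positivity
    unfold secondDiff
    linarith

theorem exists_secondDiff_le_mul_min {f : ℝ → ℝ} {A D : ℝ} (hf : ContDiff ℝ 2 f)
    (hpos : ∀ t, 0 < f t) (hanti : AntitoneOn f (Ici 0)) (hA : 0 ≤ A) (hD : 0 ≤ D)
    (hsecond : ∀ τ, A ≤ τ → -deriv (deriv f) τ ≤ D * f τ) :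
    ∃ C, 0 ≤ C ∧ ∀ x, 0 ≤ x → ∀ y, 0 < y →
      secondDiff f x y ≤ C * f x * min (y ^ 2) 1 := by
  have hf1 : Differentiable ℝ f := hf.differentiable (by norm_num)
  have hf2 : ContDiff ℝ 1 (deriv f) := hf.iterate_deriv' 1 1
  obtain ⟨K, hK⟩ := isCompact_Icc.exists_bound_of_continuousOn
    (hf2.continuous_deriv le_rfl).continuousOn (s := Icc (-1) (A + 2))
  have hK₀ : 0 ≤ K := (norm_nonneg _).trans (hK 0 ⟨by norm_num, by linarith⟩)
  refine ⟨K / f (A + 1) + 2 * D + 2, by have := hpos (A + 1); positivity, fun x hx y hy => ?_⟩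
  have hKA : 0 ≤ K / f (A + 1) := div_nonneg hK₀ (hpos _).le
  have hfx := hpos x
  rcases le_total 1 y with hy1 | hy1
  · rw [min_eq_right (by nlinarith)]
    unfold secondDiff
    nlinarith [hpos (x + y), hpos (x - y)]
  rw [min_eq_left (by nlinarith)]
  have hsq : 0 ≤ f x * y ^ 2 := by positivity
  rcases le_total x (A + 1) with hxA | hxA
  · have hN := secondDiff_le_of_neg_deriv2_le hf1 hf2.differentiable_one (x := x) hy.le (c := K)
      fun τ hτ => (neg_le_abs _).trans (hK τ ⟨by linarith [hτ.1], by linarith [hτ.2]⟩)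
    have hfA : f (A + 1) ≤ f x := hanti (mem_Ici.2 hx) (mem_Ici.2 (by linarith)) hxA
    calc _ ≤ K * y ^ 2 := hN
      _ = K / f (A + 1) * f (A + 1) * y ^ 2 := by field_simp [(hpos (A + 1)).ne']
      _ ≤ K / f (A + 1) * f x * y ^ 2 := by gcongr
      _ ≤ _ := by nlinarith
  · have hN := secondDiff_le_two_mul_of_neg_deriv2_le_mul hf1 hf2.differentiable_one
      (fun t => (hpos t).le) hanti hA hD hsecond (x := x) hy.le (by linarith)
    nlinarith

theorem stmt18_general (α cα A₁ D₀ c₀ σ : ℝ) (φ : ℝ → ℝ)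
    (hα : α ∈ Set.Ioo (0:ℝ) 1) (hcα : 0 < cα) (hA₁ : 0 < A₁) (hD₀ : 0 < D₀)
    (hc₀ : 0 < c₀)
    (hC2 : ContDiff ℝ 2 φ)
    (heven : ∀ x, φ (-x) = φ x)
    (hmono : ∀ x y : ℝ, |x| ≤ |y| → φ y ≤ φ x)
    (hsecond : ∀ x : ℝ, A₁ ≤ |x| → -(deriv (deriv φ) x) ≤ D₀ * φ x / (1 + x ^ 2))
    (hlower : ∀ x : ℝ, c₀ * (1 + |x|) ^ (-σ) ≤ φ x) :
    ∃ D : ℝ, 0 < D ∧ ∀ x : ℝ, fracLap α cα φ x ≤ D * φ x := by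
  have hpos : ∀ t, 0 < φ t := fun t =>
    (by positivity : 0 < c₀ * (1 + |t|) ^ (-σ)).trans_le (hlower t)
  have hanti : AntitoneOn φ (Ici 0) := fun a ha b hb hab =>
    hmono a b (by rwa [abs_of_nonneg ha, abs_of_nonneg hb])
  have hsecond' : ∀ τ, A₁ ≤ τ → -deriv (deriv φ) τ ≤ D₀ * φ τ := fun τ hτ =>
    (hsecond τ (hτ.trans (le_abs_self τ))).trans <|
      div_le_self (by have := hpos τ; positivity) (by nlinarith)
  obtain ⟨C, hC, hN⟩ := exists_secondDiff_le_mul_min hC2 hpos hanti hA₁.le hD₀.le hsecond'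
  set I := ∫ z : ℝ, min (z ^ 2) 1 * |z| ^ (-(1 + 2 * α))
  have key : ∀ x, 0 ≤ x → fracLap α cα φ x ≤ (cα * (C / 2 * I) + 1) * φ x := fun x hx =>
    calc fracLap α cα φ x ≤ cα * (C / 2 * I) * φ x :=
          (fracLap_le_of_secondDiff_le hα hcα.le (by have := hpos x; positivity)
            (hN x hx)).trans_eq (by ring)
      _ ≤ _ := by nlinarith [hpos x]
  refine ⟨cα * (C / 2 * I) + 1, by positivity, fun x => ?_⟩
  rcases le_total 0 x with hx | hx
  · exact key x hx
  · simpa only [fracLap_neg heven, heven] using key (-x) (neg_nonneg.2 hx)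

/-- For a bounded, even, `C²` function `φ`, nonincreasing in `|x|`, constant on
`[-A₁,A₁]`, with `-φ'' ≤ D₀ φ/(1+x²)` for `|x| ≥ A₁` and the algebraic lower bound
`φ(x) ≥ c₀ (1+|x|)^{-σ}`, there is `D > 0` with `(-Δ)^α φ ≤ D φ` everywhere. -/
theorem stmt18 (α cα A₁ D₀ c₀ σ : ℝ) (φ : ℝ → ℝ)
    (hα : α ∈ Set.Ioo (0:ℝ) 1) (hcα : 0 < cα) (hA₁ : 0 < A₁) (hD₀ : 0 < D₀)
    (hc₀ : 0 < c₀) (hσ : 0 < σ)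
    (hC2 : ContDiff ℝ 2 φ)
    (hbdd : ∃ M : ℝ, ∀ x, |φ x| ≤ M)
    (heven : ∀ x, φ (-x) = φ x)
    (hmono : ∀ x y : ℝ, |x| ≤ |y| → φ y ≤ φ x)
    (hconst : ∀ x : ℝ, |x| ≤ A₁ → φ x = φ A₁)
    (hsecond : ∀ x : ℝ, A₁ ≤ |x| → -(deriv (deriv φ) x) ≤ D₀ * φ x / (1 + x ^ 2))
    (hlower : ∀ x : ℝ, c₀ * (1 + |x|) ^ (-σ) ≤ φ x) :
    ∃ D : ℝ, 0 < D ∧ ∀ x : ℝ, fracLap α cα φ x ≤ D * φ x :=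
  stmt18_general α cα A₁ D₀ c₀ σ φ hα hcα hA₁ hD₀ hc₀ hC2 heven hmono hsecond hlower
end
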